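/- arXiv:2512.12525 — 4 statements merged into one kernel-verified Lean document; each statement's English description precedes it below -/
import Mathlib

section
/- For any sufficiently smooth pair (Φ, A) with Φ: ℝ^{d+1} → ℂ and A = (A_0, A_1, …, A_d): ℝ^{d+1} → ℝ^{d+1}, defining D_α = ∂_α − i A_α, F_{αβ} = ∂_α A_β − ∂_β A_α, (v,w) = Re(v conj(w)), and the operators S_φ[U] = (κ_0 D_0 + ε κ_1) D_0 Φ − Σ_{k=1}^d D_k D_k Φ + (1/2)(|Φ|²−1)Φ, S_j[U] = (κ_0 ∂_0 + ε κ_1) F_{0j} − Σ_k ∂_k F_{kj} − (iΦ, D_j Φ) for j = 1,…,d, and S_0[U] = −Σ_k ∂_k F_{k0} − (iΦ, D_0 Φ), the algebraic identity (S_φ[U], iΦ) = −(κ_0 ∂_0 + ε κ_1) S_0[U] + Σ_{j=1}^d ∂_j S_j[U] holds pointwise, without assuming (Φ, A) solves any equation. -/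
/-!
Pairing `S_φ` with `iΦ` kills the potential term, since `(|Φ|² - 1)/2` is real, and turns each
covariant second derivative into a divergence: `∂_α (iΦ, D_α Φ) = (D_α D_α Φ, iΦ)`, because
`(i D_α Φ, D_α Φ) = 0` and the connection terms `-i A_α` are skew for `( , )`. What remains of
`∑_j ∂_j S_j + (κ₀ ∂₀ + ε κ₁) S₀` are curvature terms, which cancel by antisymmetry of `F`
and symmetry of second derivatives: `∂_j ∂₀ F_{0j} = -∂₀ ∂_j F_{j0}`, `∂_j F_{0j} = -∂_j F_{j0}`
and `∑_{j,k} ∂_j ∂_k F_{kj} = 0`.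
-/

noncomputable section

/-- Spacetime `ℝ^{d+1}`: coordinate `0` is time, coordinate `k.succ` (`k : Fin d`) is
the `k`-th spatial direction. -/
abbrev SpaceTime (d : ℕ) := EuclideanSpace ℝ (Fin (d + 1))

/-- Partial derivative `∂_α` of a complex-valued function. -/
def pdC {d : ℕ} (α : Fin (d + 1)) (f : SpaceTime d → ℂ) (x : SpaceTime d) : ℂ :=
  fderiv ℝ f x (EuclideanSpace.single α 1)

/-- Partial derivative `∂_α` of a real-valued function. -/
def pdR {d : ℕ} (α : Fin (d + 1)) (f : SpaceTime d → ℝ) (x : SpaceTime d) : ℝ :=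
  fderiv ℝ f x (EuclideanSpace.single α 1)

/-- The real inner product `(v,w) = Re (v * conj w)` on `ℂ`. -/
def rip (v w : ℂ) : ℝ := (v * (starRingEnd ℂ) w).re

/-- Covariant derivative `D_α f = ∂_α f - i A_α f`. -/
def Dcov {d : ℕ} (A : Fin (d + 1) → SpaceTime d → ℝ) (α : Fin (d + 1))
    (f : SpaceTime d → ℂ) : SpaceTime d → ℂ :=
  fun x => pdC α f x - Complex.I * (A α x) * f x

/-- Curvature `F_{αβ} = ∂_α A_β - ∂_β A_α`. -/
def curv {d : ℕ} (A : Fin (d + 1) → SpaceTime d → ℝ) (α β : Fin (d + 1)) :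
    SpaceTime d → ℝ :=
  fun x => pdR α (A β) x - pdR β (A α) x

/-- `S_φ[U] = (κ₀ D₀ + ε κ₁) D₀ Φ − Σ_{k=1}^d D_k D_k Φ + (1/2)(|Φ|²−1)Φ`. -/
def Sphi {d : ℕ} (κ₀ κ₁ ε : ℝ) (Φ : SpaceTime d → ℂ)
    (A : Fin (d + 1) → SpaceTime d → ℝ) : SpaceTime d → ℂ :=
  fun x =>
    (κ₀ : ℂ) * Dcov A 0 (Dcov A 0 Φ) x + ((ε * κ₁ : ℝ) : ℂ) * Dcov A 0 Φ x
      - ∑ k : Fin d, Dcov A k.succ (Dcov A k.succ Φ) x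
      + (1 / 2 : ℂ) * ((Complex.normSq (Φ x) : ℂ) - 1) * Φ x

/-- `S_j[U] = (κ₀ ∂₀ + ε κ₁) F_{0j} − Σ_k ∂_k F_{kj} − (iΦ, D_j Φ)`, `j = 1,…,d`. -/
def Sj {d : ℕ} (κ₀ κ₁ ε : ℝ) (Φ : SpaceTime d → ℂ)
    (A : Fin (d + 1) → SpaceTime d → ℝ) (j : Fin d) : SpaceTime d → ℝ :=
  fun x =>
    κ₀ * pdR 0 (curv A 0 j.succ) x + ε * κ₁ * curv A 0 j.succ x
      - ∑ k : Fin d, pdR k.succ (curv A k.succ j.succ) x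
      - rip (Complex.I * Φ x) (Dcov A j.succ Φ x)

/-- `S_0[U] = −Σ_k ∂_k F_{k0} − (iΦ, D_0 Φ)`. -/
def Szero {d : ℕ} (Φ : SpaceTime d → ℂ)
    (A : Fin (d + 1) → SpaceTime d → ℝ) : SpaceTime d → ℝ :=
  fun x =>
    -(∑ k : Fin d, pdR k.succ (curv A k.succ 0) x)
      - rip (Complex.I * Φ x) (Dcov A 0 Φ x)

open Complex Finset

section

variable {d : ℕ} {α β : Fin (d + 1)} {x : SpaceTime d}

section PartialDerivatives

variable {f g : SpaceTime d → ℝ}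

theorem pdR_fun_neg : pdR α (fun y => -f y) = fun y => -pdR α f y := by
  ext x; simp [pdR, fderiv_fun_neg]

theorem pdR_add (hf : DifferentiableAt ℝ f x) (hg : DifferentiableAt ℝ g x) :
    pdR α (fun y => f y + g y) x = pdR α f x + pdR α g x := by
  simp [pdR, fderiv_fun_add hf hg]

theorem pdR_sub (hf : DifferentiableAt ℝ f x) (hg : DifferentiableAt ℝ g x) :
    pdR α (fun y => f y - g y) x = pdR α f x - pdR α g x := by
  simp [pdR, fderiv_fun_sub hf hg]

theorem pdR_const_mul (c : ℝ) (hf : DifferentiableAt ℝ f x) :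
    pdR α (fun y => c * f y) x = c * pdR α f x := by
  simp [pdR, fderiv_const_mul hf c]

theorem pdR_sum {ι : Type*} (s : Finset ι) {F : ι → SpaceTime d → ℝ}
    (hF : ∀ i ∈ s, DifferentiableAt ℝ (F i) x) :
    pdR α (fun y => ∑ i ∈ s, F i y) x = ∑ i ∈ s, pdR α (F i) x := by
  simp [pdR, fderiv_fun_sum hF]

theorem pdC_const_mul (c : ℂ) {f : SpaceTime d → ℂ} (hf : DifferentiableAt ℝ f x) :
    pdC α (fun y => c * f y) x = c * pdC α f x := by
  simp [pdC, fderiv_const_mul hf c]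

theorem ContDiff.pdR {n m : WithTop ℕ∞} (hf : ContDiff ℝ n f) (hmn : m + 1 ≤ n) :
    ContDiff ℝ m (pdR α f) :=
  (hf.fderiv_right hmn).clm_apply contDiff_const

theorem ContDiff.pdC {n m : WithTop ℕ∞} {f : SpaceTime d → ℂ} (hf : ContDiff ℝ n f)
    (hmn : m + 1 ≤ n) : ContDiff ℝ m (pdC α f) :=
  (hf.fderiv_right hmn).clm_apply contDiff_const

theorem pdR_comm (hf : ContDiff ℝ 2 f) :
    pdR α (pdR β f) x = pdR β (pdR α f) x := by
  have hdf : Differentiable ℝ (fderiv ℝ f) := (hf.fderiv_right le_rfl).differentiable one_ne_zero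
  have hsecond : ∀ v w : SpaceTime d,
      fderiv ℝ (fun y => fderiv ℝ f y w) x v = fderiv ℝ (fderiv ℝ f) x v w := by
    intro v w
    simp [fderiv_clm_apply (hdf x) (differentiableAt_const w)]
  unfold pdR
  rw [hsecond, hsecond]
  exact hf.contDiffAt.isSymmSndFDerivAt (by simp) _ _

end PartialDerivatives

theorem rip_eq_inner (v w : ℂ) : rip v w = inner ℝ v w := by
  rw [real_inner_comm, Complex.inner]; rfl

theorem rip_eq_re_mul_re_add_im_mul_im (v w : ℂ) : rip v w = v.re * w.re + v.im * w.im := by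
  simp [rip, mul_re]

theorem rip_comm (v w : ℂ) : rip v w = rip w v := by
  rw [rip_eq_inner, rip_eq_inner, real_inner_comm]

theorem rip_add_left (u v w : ℂ) : rip (u + v) w = rip u w + rip v w := by
  simp only [rip_eq_inner, inner_add_left]

theorem rip_sub_left (u v w : ℂ) : rip (u - v) w = rip u w - rip v w := by
  simp only [rip_eq_inner, inner_sub_left]

theorem rip_sum_left {ι : Type*} (s : Finset ι) (v : ι → ℂ) (w : ℂ) :
    rip (∑ i ∈ s, v i) w = ∑ i ∈ s, rip (v i) w := by
  simp only [rip_eq_inner, sum_inner]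

theorem rip_ofReal_mul_left (r : ℝ) (v w : ℂ) : rip (r * v) w = r * rip v w := by
  simp only [rip_eq_inner, ← real_smul, real_inner_smul_left]

theorem rip_self_I_mul (v : ℂ) : rip v (I * v) = 0 := by
  simp only [rip_eq_re_mul_re_add_im_mul_im, mul_re, mul_im, I_re, I_im]
  ring

@[fun_prop]
theorem DifferentiableAt.rip {f g : SpaceTime d → ℂ} (hf : DifferentiableAt ℝ f x)
    (hg : DifferentiableAt ℝ g x) : DifferentiableAt ℝ (fun y => rip (f y) (g y)) x := by
  simp only [rip_eq_inner]; exact hf.inner ℝ hg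

theorem pdR_rip {f g : SpaceTime d → ℂ} (hf : DifferentiableAt ℝ f x)
    (hg : DifferentiableAt ℝ g x) :
    pdR α (fun y => rip (f y) (g y)) x = rip (pdC α f x) (g x) + rip (f x) (pdC α g x) := by
  simp only [pdR, pdC, rip_eq_inner, fderiv_inner_apply ℝ hf hg, add_comm]

section Gauge

variable {Φ : SpaceTime d → ℂ} {A : Fin (d + 1) → SpaceTime d → ℝ}

theorem ContDiff.dcov {n m : WithTop ℕ∞} (hΦ : ContDiff ℝ n Φ) (hA : ContDiff ℝ m (A α))
    (hmn : m + 1 ≤ n) : ContDiff ℝ m (Dcov A α Φ) :=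
  (hΦ.pdC hmn).sub ((contDiff_const.mul (ofRealCLM.contDiff.comp hA)).mul
    (hΦ.of_le (le_self_add.trans hmn)))

theorem ContDiff.curv {n m : WithTop ℕ∞} (hA : ∀ γ, ContDiff ℝ n (A γ)) (hmn : m + 1 ≤ n) :
    ContDiff ℝ m (curv A α β) :=
  ((hA β).pdR hmn).sub ((hA α).pdR hmn)

theorem differentiable_pdR_curv (hA : ∀ γ, ContDiff ℝ 3 (A γ)) (γ α β : Fin (d + 1)) :
    Differentiable ℝ (pdR γ (curv A α β)) :=
  ((ContDiff.curv hA (m := 2) (by norm_num)).pdR (m := 1) (by norm_num)).differentiable one_ne_zero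

theorem differentiable_dcov (hΦ : ContDiff ℝ 2 Φ) (hA : ContDiff ℝ 1 (A α)) :
    Differentiable ℝ (Dcov A α Φ) :=
  (hΦ.dcov hA (by norm_num)).differentiable one_ne_zero

theorem pdR_rip_I_mul_dcov (hΦ : DifferentiableAt ℝ Φ x)
    (hDΦ : DifferentiableAt ℝ (Dcov A α Φ) x) :
    pdR α (fun y => rip (I * Φ y) (Dcov A α Φ y)) x
      = rip (Dcov A α (Dcov A α Φ) x) (I * Φ x) := by
  have hpdC : pdC α Φ x = Dcov A α Φ x + I * A α x * Φ x := by simp [Dcov]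
  have hDDΦ : Dcov A α (Dcov A α Φ) x = pdC α (Dcov A α Φ) x - I * A α x * Dcov A α Φ x := rfl
  rw [pdR_rip (hΦ.const_mul I) hDΦ, pdC_const_mul I hΦ, hpdC, hDDΦ]
  simp only [rip_eq_re_mul_re_add_im_mul_im, add_re, add_im, sub_re, sub_im, mul_re, mul_im,
    I_re, I_im, ofReal_re, ofReal_im]
  ring

theorem curv_swap (α β : Fin (d + 1)) : curv A α β = fun y => -curv A β α y := by
  ext y; simp [curv]

theorem pdR_curv_swap : pdR β (curv A α β) x = -pdR β (curv A β α) x := by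
  rw [curv_swap α β, pdR_fun_neg]

theorem pdR_pdR_curv_swap (hA : ∀ γ, ContDiff ℝ 3 (A γ)) :
    pdR β (pdR α (curv A α β)) x = -pdR α (pdR β (curv A β α)) x := by
  rw [curv_swap α β, pdR_fun_neg, pdR_fun_neg, pdR_comm (ContDiff.curv hA (by norm_num))]

theorem sum_sum_pdR_pdR_curv_eq_zero {ι : Type*} [Fintype ι] (e : ι → Fin (d + 1))
    (hA : ∀ γ, ContDiff ℝ 3 (A γ)) :
    ∑ j, ∑ k, pdR (e j) (pdR (e k) (curv A (e k) (e j))) x = 0 := by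
  have h : ∑ j, ∑ k, pdR (e j) (pdR (e k) (curv A (e k) (e j))) x
      = -∑ j, ∑ k, pdR (e j) (pdR (e k) (curv A (e k) (e j))) x := by
    conv_lhs => rw [sum_comm]
    rw [← sum_neg_distrib]
    refine sum_congr rfl fun k _ => ?_
    rw [← sum_neg_distrib]
    exact sum_congr rfl fun j _ => pdR_pdR_curv_swap hA
  linarith

theorem rip_Sphi_I_mul (κ₀ κ₁ ε : ℝ) :
    rip (Sphi κ₀ κ₁ ε Φ A x) (I * Φ x)
      = κ₀ * rip (Dcov A 0 (Dcov A 0 Φ) x) (I * Φ x) + ε * κ₁ * rip (Dcov A 0 Φ x) (I * Φ x)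
        - ∑ k : Fin d, rip (Dcov A k.succ (Dcov A k.succ Φ) x) (I * Φ x) := by
  have hpot : (1 / 2 : ℂ) * ((normSq (Φ x) : ℂ) - 1) * Φ x
      = ((1 / 2 * (normSq (Φ x) - 1) : ℝ) : ℂ) * Φ x := by
    push_cast; ring
  simp only [Sphi, hpot, rip_add_left, rip_sub_left, rip_sum_left, rip_ofReal_mul_left,
    rip_self_I_mul, mul_zero, add_zero]

theorem pdR_Szero (hΦ : ContDiff ℝ 2 Φ) (hA : ∀ γ, ContDiff ℝ 3 (A γ)) :
    pdR 0 (Szero Φ A) x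
      = -∑ k : Fin d, pdR 0 (pdR k.succ (curv A k.succ 0)) x
        - rip (Dcov A 0 (Dcov A 0 Φ) x) (I * Φ x) := by
  have hdF := differentiable_pdR_curv hA
  have hΦ' : Differentiable ℝ Φ := hΦ.differentiable two_ne_zero
  have hDΦ := differentiable_dcov hΦ ((hA 0).of_le (by norm_num))
  unfold Szero
  rw [pdR_sub (by fun_prop) (by fun_prop), pdR_fun_neg]
  dsimp only
  rw [pdR_sum _ fun k _ => hdF _ _ _ x, pdR_rip_I_mul_dcov (hΦ' x) (hDΦ x)]

theorem pdR_Sj (κ₀ κ₁ ε : ℝ) (hΦ : ContDiff ℝ 2 Φ) (hA : ∀ γ, ContDiff ℝ 3 (A γ)) (j : Fin d) :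
    pdR j.succ (Sj κ₀ κ₁ ε Φ A j) x
      = κ₀ * pdR j.succ (pdR 0 (curv A 0 j.succ)) x + ε * κ₁ * pdR j.succ (curv A 0 j.succ) x
        - ∑ k : Fin d, pdR j.succ (pdR k.succ (curv A k.succ j.succ)) x
        - rip (Dcov A j.succ (Dcov A j.succ Φ) x) (I * Φ x) := by
  have hF : ∀ α β, Differentiable ℝ (curv A α β) := fun α β =>
    (ContDiff.curv hA (m := 2) (by norm_num)).differentiable two_ne_zero
  have hdF := differentiable_pdR_curv hA
  have hΦ' : Differentiable ℝ Φ := hΦ.differentiable two_ne_zero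
  have hDΦ := differentiable_dcov hΦ ((hA j.succ).of_le (by norm_num))
  unfold Sj
  rw [pdR_sub (by fun_prop) (by fun_prop), pdR_sub (by fun_prop) (by fun_prop),
    pdR_add (by fun_prop) (by fun_prop), pdR_const_mul _ (hdF _ _ _ x),
    pdR_const_mul _ (hF _ _ x), pdR_sum _ fun k _ => hdF _ _ _ x,
    pdR_rip_I_mul_dcov (hΦ' x) (hDΦ x)]

end Gauge

end

theorem abelianHiggs_divergence_identity_general
    {d : ℕ} (κ₀ κ₁ ε : ℝ)
    (Φ : SpaceTime d → ℂ) (A : Fin (d + 1) → SpaceTime d → ℝ)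
    (hΦ : ContDiff ℝ (⊤ : ℕ∞) Φ) (hA : ∀ α, ContDiff ℝ (⊤ : ℕ∞) (A α))
    (x : SpaceTime d) :
    rip (Sphi κ₀ κ₁ ε Φ A x) (Complex.I * Φ x)
      = -(κ₀ * pdR 0 (Szero Φ A) x + ε * κ₁ * Szero Φ A x)
        + ∑ j : Fin d, pdR j.succ (Sj κ₀ κ₁ ε Φ A j) x := by
  have hΦ2 : ContDiff ℝ 2 Φ := hΦ.of_le (by norm_cast)
  have hA3 : ∀ α, ContDiff ℝ 3 (A α) := fun α => (hA α).of_le (by norm_cast)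
  have hSzero : Szero Φ A x
      = -∑ k : Fin d, pdR k.succ (curv A k.succ 0) x - rip (Dcov A 0 Φ x) (I * Φ x) := by
    rw [Szero, rip_comm]
  have hmixed : ∑ j : Fin d, pdR j.succ (pdR 0 (curv A 0 j.succ)) x
      = -∑ k : Fin d, pdR 0 (pdR k.succ (curv A k.succ 0)) x := by
    rw [← sum_neg_distrib]
    exact sum_congr rfl fun k _ => pdR_pdR_curv_swap hA3
  have hflux : ∑ j : Fin d, pdR j.succ (curv A 0 j.succ) x
      = -∑ k : Fin d, pdR k.succ (curv A k.succ 0) x := by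
    rw [← sum_neg_distrib]
    exact sum_congr rfl fun k _ => pdR_curv_swap
  rw [rip_Sphi_I_mul, pdR_Szero hΦ2 hA3, hSzero,
    sum_congr rfl fun j _ => pdR_Sj κ₀ κ₁ ε hΦ2 hA3 j]
  simp only [sum_sub_distrib, sum_add_distrib, ← mul_sum, hmixed, hflux,
    sum_sum_pdR_pdR_curv_eq_zero Fin.succ hA3]
  ring

/-- The algebraic identity `(S_φ[U], iΦ) = −(κ₀∂₀ + εκ₁) S₀[U] + Σ_{j=1}^d ∂_j S_j[U]`,
valid pointwise for any sufficiently smooth pair `(Φ, A)`. -/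
theorem abelianHiggs_divergence_identity
    {d : ℕ} (hd : 1 ≤ d) (κ₀ κ₁ ε : ℝ) (hκ₀ : 0 ≤ κ₀) (hκ₁ : 0 ≤ κ₁) (hε : 0 < ε)
    (Φ : SpaceTime d → ℂ) (A : Fin (d + 1) → SpaceTime d → ℝ)
    (hΦ : ContDiff ℝ (⊤ : ℕ∞) Φ) (hA : ∀ α, ContDiff ℝ (⊤ : ℕ∞) (A α))
    (x : SpaceTime d) :
    rip (Sphi κ₀ κ₁ ε Φ A x) (Complex.I * Φ x)
      = -(κ₀ * pdR 0 (Szero Φ A) x + ε * κ₁ * Szero Φ A x)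
        + ∑ j : Fin d, pdR j.succ (Sj κ₀ κ₁ ε Φ A j) x :=
  abelianHiggs_divergence_identity_general κ₀ κ₁ ε Φ A hΦ hA x
end
end

section
/- Let V: ℝ² → [0,∞) be measurable with V(x) ≥ 1/2 for |x| ≥ R for some R > 0. Then there exists c > 0 such that for all f ∈ H¹(ℝ²), c ‖f‖²_{L²(ℝ²)} ≤ ∫_{ℝ²} (|∇f|² + V f²) dx. -/
/-!
Fix a unit vector `v`. For `‖x‖ < R` and `2R < t ≤ 3R` the point `x + t • v` lies outside the
ball, and the fundamental theorem of calculus along `s ↦ x + s • v` together with Cauchy–Schwarz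
gives `f(x)² ≤ 2 f(x + t • v)² + 6R ∫₀^{3R} ‖Df(x + s • v)‖² ds`. Averaging over `t`, integrating
over the ball and using translation invariance of the measure yields
`∫_{‖x‖<R} f² ≤ 2 ∫_{‖x‖≥R} f² + 18R² ∫ ‖Df‖²`, while `f² ≤ 2 V f²` outside the ball.
Hence `∫ f² ≤ (6 + 18R²) ∫ (‖Df‖² + V f²)`.
-/

open MeasureTheory Set Metric ENNReal

theorem sq_intervalIntegral_le {g : ℝ → ℝ} (hg : Continuous g) {a b : ℝ} (hab : a ≤ b) :
    (∫ s in a..b, g s) ^ 2 ≤ (b - a) * ∫ s in a..b, g s ^ 2 := by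
  have hi : ∀ c : ℝ, IntervalIntegrable (fun s => c * g s) volume a b := fun c =>
    (hg.const_mul c).intervalIntegrable a b
  have hi2 : ∀ c : ℝ, IntervalIntegrable (fun s => c * g s ^ 2) volume a b := fun c =>
    ((hg.pow 2).const_mul c).intervalIntegrable a b
  have hexp : ∀ I L : ℝ, ∫ s in a..b, (L * g s - I) ^ 2
      = L ^ 2 * (∫ s in a..b, g s ^ 2) - 2 * L * I * (∫ s in a..b, g s) + (b - a) * I ^ 2 := by
    intro I L
    calc ∫ s in a..b, (L * g s - I) ^ 2
        = ∫ s in a..b, (L ^ 2 * g s ^ 2 - 2 * L * I * g s + I ^ 2) := by congr 1; ext s; ring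
      _ = _ := by
        rw [intervalIntegral.integral_add ((hi2 _).sub (hi _)) intervalIntegrable_const,
          intervalIntegral.integral_sub (hi2 _) (hi _), intervalIntegral.integral_const_mul,
          intervalIntegral.integral_const_mul, intervalIntegral.integral_const, smul_eq_mul]
  have hnonneg : 0 ≤ ∫ s in a..b, ((b - a) * g s - ∫ u in a..b, g u) ^ 2 :=
    intervalIntegral.integral_nonneg hab fun s _ => sq_nonneg _
  rw [hexp] at hnonneg
  rcases hab.eq_or_lt with rfl | hlt
  · simp
  · nlinarith [sub_pos.2 hlt]

theorem setLIntegral_comp_add_right_le {G : Type*} [AddGroup G] [MeasurableSpace G]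
    [MeasurableAdd G] {μ : Measure G} [μ.IsAddRightInvariant] {s t : Set G}
    (g : G → ℝ≥0∞) (hs : MeasurableSet s) (ht : MeasurableSet t) {a : G}
    (hst : ∀ x ∈ s, x + a ∈ t) : ∫⁻ x in s, g (x + a) ∂μ ≤ ∫⁻ y in t, g y ∂μ :=
  calc ∫⁻ x in s, g (x + a) ∂μ ≤ ∫⁻ x in s, t.indicator g (x + a) ∂μ :=
        setLIntegral_mono' hs fun x hx => (indicator_of_mem (hst x hx) g).ge
    _ ≤ ∫⁻ x, t.indicator g (x + a) ∂μ := setLIntegral_le_lintegral _ _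
    _ = ∫⁻ y in t, g y ∂μ := by rw [lintegral_add_right_eq_self, lintegral_indicator ht]

theorem setLIntegral_compl_ball_sq_le {E : Type*} [NormedAddCommGroup E] [MeasurableSpace E]
    [OpensMeasurableSpace E] {μ : Measure E} {V : E → ℝ} {R : ℝ}
    (hV : ∀ x, R ≤ ‖x‖ → 1 / 2 ≤ V x) (f : E → ℝ) :
    ∫⁻ x in (ball 0 R)ᶜ, ENNReal.ofReal (f x ^ 2) ∂μ
      ≤ 2 * ∫⁻ x, ENNReal.ofReal (V x * f x ^ 2) ∂μ :=
  calc ∫⁻ x in (ball 0 R)ᶜ, ENNReal.ofReal (f x ^ 2) ∂μ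
      ≤ ∫⁻ x in (ball 0 R)ᶜ, 2 * ENNReal.ofReal (V x * f x ^ 2) ∂μ := by
        refine setLIntegral_mono' measurableSet_ball.compl fun x hx => ?_
        have := hV x (by simpa using hx)
        rw [← ENNReal.ofReal_ofNat, ← ENNReal.ofReal_mul zero_le_two]
        exact ENNReal.ofReal_le_ofReal (by nlinarith [sq_nonneg (f x)])
    _ ≤ 2 * ∫⁻ x, ENNReal.ofReal (V x * f x ^ 2) ∂μ := by
        rw [← lintegral_const_mul' _ _ ofNat_ne_top]
        exact setLIntegral_le_lintegral _ _

section

variable {E : Type*} [NormedAddCommGroup E] [NormedSpace ℝ E] {f : E → ℝ}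

theorem sq_le_two_mul_sq_add_integral_fderiv (hf : ContDiff ℝ 1 f) (x v : E) {t : ℝ}
    (ht : 0 ≤ t) :
    f x ^ 2 ≤ 2 * f (x + t • v) ^ 2
      + 2 * t * ‖v‖ ^ 2 * ∫ s in 0..t, ‖fderiv ℝ f (x + s • v)‖ ^ 2 := by
  have hD : Continuous (fderiv ℝ f) := hf.continuous_fderiv one_ne_zero
  have hderiv : ∀ s : ℝ,
      HasDerivAt (fun s => f (x + s • v)) (fderiv ℝ f (x + s • v) v) s := fun s => by
    have hline : HasDerivAt (fun s : ℝ => x + s • v) v s := by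
      simpa using ((hasDerivAt_id s).smul_const v).const_add x
    exact (hf.differentiable one_ne_zero _).hasFDerivAt.comp_hasDerivAt s hline
  have hcont : Continuous fun s : ℝ => fderiv ℝ f (x + s • v) v := by fun_prop
  have hftc : f (x + t • v) - f x = ∫ s in 0..t, fderiv ℝ f (x + s • v) v := by
    rw [intervalIntegral.integral_eq_sub_of_hasDerivAt (fun s _ => hderiv s)
      (hcont.intervalIntegrable _ _), zero_smul, add_zero]
  have hopNorm : ∫ s in 0..t, (fderiv ℝ f (x + s • v) v) ^ 2
      ≤ ‖v‖ ^ 2 * ∫ s in 0..t, ‖fderiv ℝ f (x + s • v)‖ ^ 2 := by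
    rw [← intervalIntegral.integral_const_mul]
    refine intervalIntegral.integral_mono_on ht ((hcont.pow 2).intervalIntegrable _ _)
      (Continuous.intervalIntegrable (by fun_prop) _ _) fun s _ => ?_
    rw [← sq_abs, ← mul_pow, mul_comm]
    exact pow_le_pow_left₀ (abs_nonneg _) ((fderiv ℝ f (x + s • v)).le_opNorm v) 2
  have hCS := sq_intervalIntegral_le hcont ht
  rw [sub_zero, ← hftc] at hCS
  nlinarith [sq_nonneg (f (x + t • v) + (f (x + t • v) - f x))]

theorem ofReal_sq_le_of_mem_Icc (hf : ContDiff ℝ 1 f) (x v : E) {t b : ℝ} (ht : t ∈ Icc 0 b) :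
    ENNReal.ofReal (f x ^ 2) ≤ 2 * ENNReal.ofReal (f (x + t • v) ^ 2)
      + ENNReal.ofReal (2 * b * ‖v‖ ^ 2)
        * ∫⁻ s in Ioc 0 b, ENNReal.ofReal (‖fderiv ℝ f (x + s • v)‖ ^ 2) := by
  obtain ⟨ht0, htb⟩ := ht
  have hcont : Continuous fun s : ℝ => ‖fderiv ℝ f (x + s • v)‖ ^ 2 := by
    have := hf.continuous_fderiv one_ne_zero
    fun_prop
  have hint : ENNReal.ofReal (∫ s in 0..t, ‖fderiv ℝ f (x + s • v)‖ ^ 2)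
      = ∫⁻ s in Ioc 0 t, ENNReal.ofReal (‖fderiv ℝ f (x + s • v)‖ ^ 2) := by
    rw [intervalIntegral.integral_of_le ht0, ofReal_integral_eq_lintegral_ofReal
      hcont.integrableOn_Ioc (ae_of_all _ fun s => sq_nonneg _)]
  calc ENNReal.ofReal (f x ^ 2)
      ≤ ENNReal.ofReal (2 * f (x + t • v) ^ 2
          + 2 * t * ‖v‖ ^ 2 * ∫ s in 0..t, ‖fderiv ℝ f (x + s • v)‖ ^ 2) :=
        ENNReal.ofReal_le_ofReal (sq_le_two_mul_sq_add_integral_fderiv hf x v ht0)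
    _ = 2 * ENNReal.ofReal (f (x + t • v) ^ 2) + ENNReal.ofReal (2 * t * ‖v‖ ^ 2)
          * ∫⁻ s in Ioc 0 t, ENNReal.ofReal (‖fderiv ℝ f (x + s • v)‖ ^ 2) := by
        have hI : 0 ≤ ∫ s in 0..t, ‖fderiv ℝ f (x + s • v)‖ ^ 2 :=
          intervalIntegral.integral_nonneg ht0 fun _ _ => by positivity
        rw [ENNReal.ofReal_add (by positivity) (mul_nonneg (by positivity) hI),
          ENNReal.ofReal_mul (by positivity), ENNReal.ofReal_mul (by positivity), hint,
          ENNReal.ofReal_ofNat]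
    _ ≤ _ := by
        gcongr _ + ENNReal.ofReal (2 * ?_ * _) * ?_
        exact lintegral_mono_set (Ioc_subset_Ioc_right htb)

theorem ofReal_mul_sq_le_setLIntegral (hf : ContDiff ℝ 1 f) (x v : E) {a b : ℝ} (ha : 0 ≤ a)
    (hab : a ≤ b) :
    ENNReal.ofReal (b - a) * ENNReal.ofReal (f x ^ 2)
      ≤ 2 * (∫⁻ t in Ioc a b, ENNReal.ofReal (f (x + t • v) ^ 2))
        + ENNReal.ofReal ((b - a) * (2 * b * ‖v‖ ^ 2))
          * ∫⁻ s in Ioc 0 b, ENNReal.ofReal (‖fderiv ℝ f (x + s • v)‖ ^ 2) := by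
  set K := ∫⁻ s in Ioc 0 b, ENNReal.ofReal (‖fderiv ℝ f (x + s • v)‖ ^ 2)
  calc ENNReal.ofReal (b - a) * ENNReal.ofReal (f x ^ 2)
      = ∫⁻ _ in Ioc a b, ENNReal.ofReal (f x ^ 2) := by
        rw [setLIntegral_const, Real.volume_Ioc, mul_comm]
    _ ≤ ∫⁻ t in Ioc a b, (2 * ENNReal.ofReal (f (x + t • v) ^ 2)
          + ENNReal.ofReal (2 * b * ‖v‖ ^ 2) * K) :=
        setLIntegral_mono' measurableSet_Ioc fun t ht =>
          ofReal_sq_le_of_mem_Icc hf x v ⟨ha.trans ht.1.le, ht.2⟩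
    _ = _ := by
        rw [lintegral_add_right _ measurable_const, lintegral_const_mul' _ _ ofNat_ne_top,
          setLIntegral_const, Real.volume_Ioc, ENNReal.ofReal_mul (sub_nonneg.2 hab)]
        ring

theorem add_smul_mem_compl_ball {x v : E} (hv : ‖v‖ = 1) {R t : ℝ} (hx : x ∈ ball 0 R)
    (ht : 2 * R ≤ t) : x + t • v ∈ (ball 0 R)ᶜ := by
  rw [mem_ball_zero_iff] at hx
  have := norm_sub_le (x + t • v) x
  rw [add_sub_cancel_left, norm_smul, hv, mul_one,
    Real.norm_of_nonneg (by linarith [norm_nonneg x])] at this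
  rw [mem_compl_iff, mem_ball_zero_iff, not_lt]
  linarith

variable [MeasurableSpace E] [BorelSpace E]
  {μ : Measure E} [μ.IsAddRightInvariant] [SFinite μ]

theorem lintegral_setLIntegral_comp_add_smul {g : E → ℝ≥0∞} (hg : Continuous g) (v : E)
    (S : Set ℝ) : ∫⁻ x, (∫⁻ s in S, g (x + s • v)) ∂μ = volume S * ∫⁻ x, g x ∂μ := by
  have hgm : Measurable fun p : E × ℝ => g (p.1 + p.2 • v) :=
    (hg.comp (by fun_prop)).measurable
  rw [lintegral_lintegral_swap hgm.aemeasurable]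
  simp_rw [lintegral_add_right_eq_self g]
  rw [setLIntegral_const, mul_comm]

theorem ofReal_mul_lintegral_ball_sq_le (hf : ContDiff ℝ 1 f) {v : E} (hv : ‖v‖ = 1) {R : ℝ}
    (hR : 0 < R) :
    ENNReal.ofReal R * ∫⁻ x in ball 0 R, ENNReal.ofReal (f x ^ 2) ∂μ
      ≤ ENNReal.ofReal R * (2 * ∫⁻ x in (ball 0 R)ᶜ, ENNReal.ofReal (f x ^ 2) ∂μ
        + ENNReal.ofReal (18 * R ^ 2) * ∫⁻ x, ENNReal.ofReal (‖fderiv ℝ f x‖ ^ 2) ∂μ) := by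
  set F : E → ℝ≥0∞ := fun x => ENNReal.ofReal (f x ^ 2)
  set G : E → ℝ≥0∞ := fun x => ENNReal.ofReal (‖fderiv ℝ f x‖ ^ 2)
  set J := ∫⁻ y in (ball 0 R)ᶜ, F y ∂μ
  have hFm : Measurable fun p : E × ℝ => F (p.1 + p.2 • v) := by
    have := hf.continuous
    exact (ENNReal.continuous_ofReal.comp (by fun_prop)).measurable
  have hGc : Continuous G := by
    have := hf.continuous_fderiv one_ne_zero
    exact ENNReal.continuous_ofReal.comp (by fun_prop)
  have hexit : ∀ t ∈ Ioc (2 * R) (3 * R), ∫⁻ x in ball 0 R, F (x + t • v) ∂μ ≤ J :=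
    fun t ht => setLIntegral_comp_add_right_le F measurableSet_ball measurableSet_ball.compl
      fun x hx => add_smul_mem_compl_ball hv hx ht.1.le
  have hconst : ENNReal.ofReal (R * (6 * R)) * ENNReal.ofReal (3 * R)
      = ENNReal.ofReal R * ENNReal.ofReal (18 * R ^ 2) := by
    rw [← ENNReal.ofReal_mul (by positivity), ← ENNReal.ofReal_mul hR.le]
    ring_nf
  calc ENNReal.ofReal R * ∫⁻ x in ball 0 R, F x ∂μ
      = ∫⁻ x in ball 0 R, ENNReal.ofReal (3 * R - 2 * R) * F x ∂μ := by
        rw [lintegral_const_mul' _ _ ofReal_ne_top, show 3 * R - 2 * R = R by ring]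
    _ ≤ ∫⁻ x in ball 0 R, (2 * (∫⁻ t in Ioc (2 * R) (3 * R), F (x + t • v))
          + ENNReal.ofReal (R * (6 * R)) * ∫⁻ s in Ioc 0 (3 * R), G (x + s • v)) ∂μ := by
        refine lintegral_mono fun x => ?_
        convert ofReal_mul_sq_le_setLIntegral hf x v (by positivity : 0 ≤ 2 * R)
          (by linarith : 2 * R ≤ 3 * R) using 4
        rw [hv]; ring
    _ = 2 * ∫⁻ x in ball 0 R, (∫⁻ t in Ioc (2 * R) (3 * R), F (x + t • v)) ∂μ
          + ENNReal.ofReal (R * (6 * R))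
            * ∫⁻ x in ball 0 R, (∫⁻ s in Ioc 0 (3 * R), G (x + s • v)) ∂μ := by
        rw [lintegral_add_left (hFm.lintegral_prod_right'.const_mul 2),
          lintegral_const_mul' _ _ ofNat_ne_top, lintegral_const_mul' _ _ ofReal_ne_top]
    _ ≤ 2 * (∫⁻ _ in Ioc (2 * R) (3 * R), J)
          + ENNReal.ofReal (R * (6 * R))
            * ∫⁻ x, (∫⁻ s in Ioc 0 (3 * R), G (x + s • v)) ∂μ := by
        rw [lintegral_lintegral_swap hFm.aemeasurable]
        gcongr 2 * ?_ + _ * ?_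
        · exact setLIntegral_mono' measurableSet_Ioc hexit
        · exact setLIntegral_le_lintegral _ _
    _ = ENNReal.ofReal R * (2 * J + ENNReal.ofReal (18 * R ^ 2) * ∫⁻ x, G x ∂μ) := by
        rw [lintegral_setLIntegral_comp_add_smul hGc, setLIntegral_const, Real.volume_Ioc,
          Real.volume_Ioc, sub_zero, ← mul_assoc _ (ENNReal.ofReal _), hconst,
          show 3 * R - 2 * R = R by ring]
        ring

theorem lintegral_ball_sq_le (hf : ContDiff ℝ 1 f) {v : E} (hv : ‖v‖ = 1) (R : ℝ) :
    ∫⁻ x in ball 0 R, ENNReal.ofReal (f x ^ 2) ∂μ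
      ≤ 2 * ∫⁻ x in (ball 0 R)ᶜ, ENNReal.ofReal (f x ^ 2) ∂μ
        + ENNReal.ofReal (18 * R ^ 2) * ∫⁻ x, ENNReal.ofReal (‖fderiv ℝ f x‖ ^ 2) ∂μ := by
  rcases le_or_gt R 0 with hR | hR
  · simp [ball_eq_empty.2 hR]
  exact (ENNReal.mul_le_mul_iff_right (ofReal_pos.2 hR).ne' ofReal_ne_top).1
    (ofReal_mul_lintegral_ball_sq_le hf hv hR)

theorem lintegral_sq_le_of_potential [Nontrivial E] (hf : ContDiff ℝ 1 f) {V : E → ℝ} {R : ℝ}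
    (hV0 : ∀ x, 0 ≤ V x) (hV : ∀ x, R ≤ ‖x‖ → 1 / 2 ≤ V x) :
    ∫⁻ x, ENNReal.ofReal (f x ^ 2) ∂μ
      ≤ ENNReal.ofReal (6 + 18 * R ^ 2)
        * ∫⁻ x, ENNReal.ofReal (‖fderiv ℝ f x‖ ^ 2 + V x * f x ^ 2) ∂μ := by
  obtain ⟨v, hv⟩ := exists_norm_eq E zero_le_one
  have henergy : ∫⁻ x, ENNReal.ofReal (‖fderiv ℝ f x‖ ^ 2 + V x * f x ^ 2) ∂μ
      = ∫⁻ x, ENNReal.ofReal (‖fderiv ℝ f x‖ ^ 2) ∂μ + ∫⁻ x, ENNReal.ofReal (V x * f x ^ 2) ∂μ := by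
    have hG : Measurable fun x => ENNReal.ofReal (‖fderiv ℝ f x‖ ^ 2) := by
      have := hf.continuous_fderiv one_ne_zero
      exact (ENNReal.continuous_ofReal.comp (by fun_prop)).measurable
    rw [← lintegral_add_left hG]
    exact lintegral_congr fun x =>
      ENNReal.ofReal_add (sq_nonneg _) (mul_nonneg (hV0 x) (sq_nonneg _))
  set C : ℝ := 6 + 18 * R ^ 2
  set gradE := ∫⁻ x, ENNReal.ofReal (‖fderiv ℝ f x‖ ^ 2) ∂μ
  set potE := ∫⁻ x, ENNReal.ofReal (V x * f x ^ 2) ∂μ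
  set inside := ∫⁻ x in ball 0 R, ENNReal.ofReal (f x ^ 2) ∂μ
  set outside := ∫⁻ x in (ball 0 R)ᶜ, ENNReal.ofReal (f x ^ 2) ∂μ
  have hout : outside ≤ 2 * potE := setLIntegral_compl_ball_sq_le hV f
  calc ∫⁻ x, ENNReal.ofReal (f x ^ 2) ∂μ = inside + outside :=
        (lintegral_add_compl _ measurableSet_ball).symm
    _ ≤ 2 * outside + ENNReal.ofReal (18 * R ^ 2) * gradE + outside :=
        add_le_add_left (lintegral_ball_sq_le hf hv R) _
    _ ≤ 2 * (2 * potE) + ENNReal.ofReal (18 * R ^ 2) * gradE + 2 * potE := by gcongr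
    _ = 6 * potE + ENNReal.ofReal (18 * R ^ 2) * gradE := by ring
    _ ≤ ENNReal.ofReal C * potE + ENNReal.ofReal C * gradE := by
        gcongr
        · rw [← ENNReal.ofReal_ofNat]
          exact ENNReal.ofReal_le_ofReal (le_add_of_nonneg_right (by positivity))
        · exact le_add_of_nonneg_left (by norm_num)
    _ = ENNReal.ofReal C * ∫⁻ x, ENNReal.ofReal (‖fderiv ℝ f x‖ ^ 2 + V x * f x ^ 2) ∂μ := by
        rw [henergy]; ring

end

theorem spectral_gap_schroedinger_R2_general
    (V : EuclideanSpace ℝ (Fin 2) → ℝ) (R : ℝ)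
    (hV0 : ∀ x, 0 ≤ V x)
    (hV : ∀ x : EuclideanSpace ℝ (Fin 2), R ≤ ‖x‖ → 1 / 2 ≤ V x) :
    ∃ c > (0 : ℝ), ∀ f : EuclideanSpace ℝ (Fin 2) → ℝ, ContDiff ℝ 1 f →
      ENNReal.ofReal c * ∫⁻ x, ENNReal.ofReal (f x ^ 2)
        ≤ ∫⁻ x, ENNReal.ofReal (‖fderiv ℝ f x‖ ^ 2 + V x * f x ^ 2) := by
  set C : ℝ := 6 + 18 * R ^ 2
  refine ⟨C⁻¹, by positivity, fun f hf => ?_⟩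
  calc ENNReal.ofReal C⁻¹ * ∫⁻ x, ENNReal.ofReal (f x ^ 2)
      ≤ ENNReal.ofReal C⁻¹
        * (ENNReal.ofReal C * ∫⁻ x, ENNReal.ofReal (‖fderiv ℝ f x‖ ^ 2 + V x * f x ^ 2)) := by
        gcongr
        exact lintegral_sq_le_of_potential hf hV0 hV
    _ = ∫⁻ x, ENNReal.ofReal (‖fderiv ℝ f x‖ ^ 2 + V x * f x ^ 2) := by
        rw [← mul_assoc, ← ENNReal.ofReal_mul (by positivity),
          inv_mul_cancel₀ (by positivity), ENNReal.ofReal_one, one_mul]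

/-- Spectral gap for `−Δ + V` on `ℝ²` with potential `V ≥ 0` bounded below by `1/2`
outside a ball: there is `c > 0` with `c ∫ f² ≤ ∫ (|∇f|² + V f²)` for all
(H¹, here: C¹) functions `f`. -/
theorem spectral_gap_schroedinger_R2
    (V : EuclideanSpace ℝ (Fin 2) → ℝ) (R : ℝ) (hR : 0 < R)
    (hVmeas : Measurable V) (hV0 : ∀ x, 0 ≤ V x)
    (hV : ∀ x : EuclideanSpace ℝ (Fin 2), R ≤ ‖x‖ → 1 / 2 ≤ V x) :
    ∃ c > (0 : ℝ), ∀ f : EuclideanSpace ℝ (Fin 2) → ℝ, ContDiff ℝ 1 f →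
      ENNReal.ofReal c * ∫⁻ x, ENNReal.ofReal (f x ^ 2)
        ≤ ∫⁻ x, ENNReal.ofReal (‖fderiv ℝ f x‖ ^ 2 + V x * f x ^ 2) :=
  spectral_gap_schroedinger_R2_general V R hV0 hV
end

section
/- Let φ: ℝ² → ℂ be continuous with |φ(x)| ≤ 1 everywhere and |φ(x)| → 1 as |x| → ∞. Then there exist constants 0 < c ≤ 1 such that for all f ∈ H¹(ℝ²), c ‖f‖²_{H¹(ℝ²)} ≤ ∫_{ℝ²} (|∇f|² + |φ|² f²) dx ≤ ‖f‖²_{H¹(ℝ²)}. -/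
/-!
On each vertical line the fundamental theorem of calculus and `2|g g'| ≤ δ g² + δ⁻¹ g'²` give
`g(a)² ≤ g(s)² + ∫ (δ g² + δ⁻¹ g'²)` for `a ≤ s`. Averaging `s` over `[2R, 4R]` and integrating
`a` over `[-R, R]` bounds the mass of `f²` in the strip `|x₂| ≤ R` by its mass outside the strip
plus `2R (δ ‖f‖² + δ⁻¹ ‖∂₂ f‖²)`; for `δ = 1/(4R)` half of `‖f‖²` is absorbed, so
`‖f‖² ≤ 4 ∫_{|x| ≥ R} f² + 16 R² ‖∇f‖²`. Choosing `R` with `|φ|² ≥ 1/4` outside the ball of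
radius `R` turns the first term into `16 ∫ |φ|² f²`; this explicit estimate replaces the
compactness argument for the spectral gap of `-Δ + V`.
-/

open MeasureTheory Set

theorem sq_le_sq_add_integral_of_hasDerivAt {g g' : ℝ → ℝ} (hg : ∀ t, HasDerivAt g (g' t) t)
    (hg' : Continuous g') {δ : ℝ} (hδ : 0 < δ)
    (hint : Integrable fun t => δ * g t ^ 2 + δ⁻¹ * g' t ^ 2) {a b : ℝ} (hab : a ≤ b) :
    g a ^ 2 ≤ g b ^ 2 + ∫ t, (δ * g t ^ 2 + δ⁻¹ * g' t ^ 2) := by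
  have hgc : Continuous g := continuous_iff_continuousAt.2 fun t => (hg t).continuousAt
  have hcont : Continuous fun t => 2 * g t * g' t := by fun_prop
  have ftc : ∫ t in a..b, 2 * g t * g' t = g b ^ 2 - g a ^ 2 :=
    intervalIntegral.integral_eq_sub_of_hasDerivAt
      (fun t _ => by simpa [mul_comm, mul_assoc] using (hg t).pow 2)
      (hcont.intervalIntegrable a b)
  have amgm : ∀ t, -(2 * g t * g' t) ≤ δ * g t ^ 2 + δ⁻¹ * g' t ^ 2 := fun t => by
    have : δ * g t ^ 2 + δ⁻¹ * g' t ^ 2 + 2 * g t * g' t = δ⁻¹ * (δ * g t + g' t) ^ 2 := by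
      field_simp; ring
    nlinarith [mul_nonneg (inv_nonneg.2 hδ.le) (sq_nonneg (δ * g t + g' t))]
  have hmono : ∫ t in a..b, -(2 * g t * g' t) ≤ ∫ t in a..b, (δ * g t ^ 2 + δ⁻¹ * g' t ^ 2) :=
    intervalIntegral.integral_mono_on hab (hcont.neg.intervalIntegrable a b)
      hint.intervalIntegrable fun t _ => amgm t
  have hle : ∫ t in a..b, (δ * g t ^ 2 + δ⁻¹ * g' t ^ 2) ≤ ∫ t, (δ * g t ^ 2 + δ⁻¹ * g' t ^ 2) := by
    rw [intervalIntegral.integral_of_le hab]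
    exact setIntegral_le_integral hint (Filter.Eventually.of_forall fun t => by positivity)
  rw [intervalIntegral.integral_neg, ftc] at hmono
  linarith

theorem setIntegral_Icc_sq_le_of_hasDerivAt {g g' : ℝ → ℝ} (hg : ∀ t, HasDerivAt g (g' t) t)
    (hg' : Continuous g') {δ : ℝ} (hδ : 0 < δ)
    (hint : Integrable fun t => δ * g t ^ 2 + δ⁻¹ * g' t ^ 2) {R : ℝ} (hR : 0 < R) :
    ∫ t in Icc (-R) R, g t ^ 2 ≤
      (∫ t in Icc (2 * R) (4 * R), g t ^ 2) + 2 * R * ∫ t, (δ * g t ^ 2 + δ⁻¹ * g' t ^ 2) := by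
  set C := ∫ t, (δ * g t ^ 2 + δ⁻¹ * g' t ^ 2)
  set I := ∫ t in Icc (2 * R) (4 * R), g t ^ 2
  have hgc : Continuous fun t => g t ^ 2 :=
    (continuous_iff_continuousAt.2 fun t => (hg t).continuousAt).pow 2
  have hpt : ∀ a ∈ Icc (-R) R, g a ^ 2 ≤ (I + 2 * R * C) / (2 * R) := by
    intro a ha
    have hmono : ∫ _ in Icc (2 * R) (4 * R), g a ^ 2 ≤ ∫ s in Icc (2 * R) (4 * R), (g s ^ 2 + C) :=
      setIntegral_mono_on (integrableOn_const measure_Icc_lt_top.ne)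
        (hgc.integrableOn_Icc.add (integrableOn_const measure_Icc_lt_top.ne)) measurableSet_Icc
        fun s hs => sq_le_sq_add_integral_of_hasDerivAt hg hg' hδ hint (by linarith [ha.2, hs.1])
    rw [setIntegral_const, integral_add hgc.integrableOn_Icc
      (integrableOn_const measure_Icc_lt_top.ne), setIntegral_const,
      Real.volume_real_Icc_of_le (by linarith), smul_eq_mul, smul_eq_mul] at hmono
    rw [le_div_iff₀ (by positivity)]
    linarith
  calc ∫ t in Icc (-R) R, g t ^ 2 ≤ ∫ _ in Icc (-R) R, (I + 2 * R * C) / (2 * R) :=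
        setIntegral_mono_on hgc.integrableOn_Icc (integrableOn_const measure_Icc_lt_top.ne)
          measurableSet_Icc hpt
    _ = I + 2 * R * C := by
        rw [setIntegral_const, Real.volume_real_Icc_of_le (by linarith), smul_eq_mul]
        field_simp
        ring

theorem integral_sq_le_of_hasDerivAt_snd {X : Type*} [MeasurableSpace X] {μ : Measure X}
    [SFinite μ] {f f' : X × ℝ → ℝ} (hf : ∀ x t, HasDerivAt (fun s => f (x, s)) (f' (x, t)) t)
    (hf' : ∀ x, Continuous fun t => f' (x, t))
    (hf2 : Integrable (fun p => f p ^ 2) (μ.prod volume))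
    (hf'2 : Integrable (fun p => f' p ^ 2) (μ.prod volume)) {R : ℝ} (hR : 0 < R) :
    ∫ p, f p ^ 2 ∂μ.prod volume ≤
      4 * (∫ p in {p | R < |p.2|}, f p ^ 2 ∂μ.prod volume) +
        16 * R ^ 2 * ∫ p, f' p ^ 2 ∂μ.prod volume := by
  -- `2 R δ = 1/2`, so the strip estimate absorbs half of `∫ f²`
  set δ : ℝ := (4 * R)⁻¹
  have hδ : 0 < δ := by positivity
  have hh : Integrable (fun p => δ * f p ^ 2 + δ⁻¹ * f' p ^ 2) (μ.prod volume) :=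
    (hf2.const_mul δ).add (hf'2.const_mul δ⁻¹)
  have hslice : ∀ t : Set ℝ, Integrable (fun x => ∫ y in t, f (x, y) ^ 2) μ := fun t => by
    have := hf2.restrict (s := univ ×ˢ t)
    rw [← Measure.prod_restrict, Measure.restrict_univ] at this
    exact this.integral_prod_left
  have hstrip : ∫ p in univ ×ˢ Icc (-R) R, f p ^ 2 ∂μ.prod volume ≤
      ∫ p in univ ×ˢ Icc (2 * R) (4 * R), f p ^ 2 ∂μ.prod volume +
        2 * R * ∫ p, (δ * f p ^ 2 + δ⁻¹ * f' p ^ 2) ∂μ.prod volume := by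
    rw [setIntegral_prod _ hf2.integrableOn, setIntegral_prod _ hf2.integrableOn,
      Measure.restrict_univ, integral_prod _ hh, ← integral_const_mul,
      ← integral_add (hslice _) (hh.integral_prod_left.const_mul _)]
    exact integral_mono_ae (hslice _) ((hslice _).add (hh.integral_prod_left.const_mul _))
      (hh.prod_right_ae.mono fun x hx =>
        setIntegral_Icc_sq_le_of_hasDerivAt (hf x) (hf' x) hδ hx hR)
  have hcompl : (univ ×ˢ Icc (-R) R : Set (X × ℝ))ᶜ = {p | R < |p.2|} := by
    ext p
    simp only [mem_compl_iff, mem_prod, mem_univ, true_and, mem_Icc, ← abs_le, not_le,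
      mem_ofPred_eq]
  have hfar : ∫ p in univ ×ˢ Icc (2 * R) (4 * R), f p ^ 2 ∂μ.prod volume ≤
      ∫ p in {p | R < |p.2|}, f p ^ 2 ∂μ.prod volume := by
    refine setIntegral_mono_set hf2.integrableOn (Filter.Eventually.of_forall fun p => sq_nonneg _)
      (Filter.Eventually.of_forall fun p hp => ?_)
    have : 2 * R ≤ p.2 := hp.2.1
    show R < |p.2|
    rw [abs_of_pos (by linarith)]
    linarith
  have hsplit := integral_add_compl (s := univ ×ˢ Icc (-R) R)
    (MeasurableSet.univ.prod measurableSet_Icc) hf2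
  rw [hcompl] at hsplit
  have hconst : 2 * R * ∫ p, (δ * f p ^ 2 + δ⁻¹ * f' p ^ 2) ∂μ.prod volume =
      (∫ p, f p ^ 2 ∂μ.prod volume) / 2 + 8 * R ^ 2 * ∫ p, f' p ^ 2 ∂μ.prod volume := by
    rw [integral_add (hf2.const_mul δ) (hf'2.const_mul δ⁻¹), integral_const_mul,
      integral_const_mul]
    simp only [δ, inv_inv]
    field_simp
    ring
  linarith

noncomputable def prodEquivEuclideanFinTwo : (ℝ × ℝ) ≃L[ℝ] EuclideanSpace ℝ (Fin 2) :=
  ((EuclideanSpace.equiv (Fin 2) ℝ).trans (ContinuousLinearEquiv.finTwoArrow ℝ ℝ)).symm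

theorem prodEquivEuclideanFinTwo_apply (p : ℝ × ℝ) :
    prodEquivEuclideanFinTwo p = !₂[p.1, p.2] := rfl

theorem measurePreserving_prodEquivEuclideanFinTwo :
    MeasurePreserving prodEquivEuclideanFinTwo :=
  (PiLp.volume_preserving_toLp (ι := Fin 2)).comp (volume_preserving_finTwoArrow ℝ).symm

theorem abs_snd_le_norm_prodEquivEuclideanFinTwo (p : ℝ × ℝ) :
    |p.2| ≤ ‖prodEquivEuclideanFinTwo p‖ :=
  PiLp.norm_apply_le (prodEquivEuclideanFinTwo p) 1

theorem norm_prodEquivEuclideanFinTwo_zero_one : ‖prodEquivEuclideanFinTwo (0, 1)‖ = 1 := by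
  simp [prodEquivEuclideanFinTwo_apply, EuclideanSpace.norm_eq]

theorem integral_sq_le_setIntegral_compl_ball {f : EuclideanSpace ℝ (Fin 2) → ℝ}
    (hf : ContDiff ℝ 1 f) (hf2 : Integrable fun x => f x ^ 2)
    (hdf2 : Integrable fun x => ‖fderiv ℝ f x‖ ^ 2) {R : ℝ} (hR : 0 < R) :
    ∫ x, f x ^ 2 ≤
      4 * (∫ x in (Metric.ball 0 R)ᶜ, f x ^ 2) + 16 * R ^ 2 * ∫ x, ‖fderiv ℝ f x‖ ^ 2 := by
  set e := prodEquivEuclideanFinTwo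
  have he := measurePreserving_prodEquivEuclideanFinTwo
  have hemb := e.toHomeomorph.measurableEmbedding
  set v := e (0, 1)
  have hderiv : ∀ x t, HasDerivAt (fun s => f (e (x, s))) (fderiv ℝ f (e (x, t)) v) t :=
    fun x t => (hf.differentiable one_ne_zero _).hasFDerivAt.comp_hasDerivAt t
      (e.hasFDerivAt.comp_hasDerivAt t ((hasDerivAt_const t x).prodMk (hasDerivAt_id t)))
  have hdfc : Continuous (fderiv ℝ f) := hf.continuous_fderiv one_ne_zero
  have hcont : ∀ x, Continuous fun t => fderiv ℝ f (e (x, t)) v := fun x => by fun_prop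
  have hdv : ∀ p, (fderiv ℝ f (e p) v) ^ 2 ≤ ‖fderiv ℝ f (e p)‖ ^ 2 := fun p => by
    have := (fderiv ℝ f (e p)).le_opNorm v
    rw [norm_prodEquivEuclideanFinTwo_zero_one, mul_one, Real.norm_eq_abs] at this
    simpa using pow_le_pow_left₀ (abs_nonneg _) this 2
  have hdf2e : Integrable fun p => ‖fderiv ℝ f (e p)‖ ^ 2 := (he.integrable_comp_emb hemb).2 hdf2
  have hdv2 : Integrable fun p => (fderiv ℝ f (e p) v) ^ 2 :=
    hdf2e.mono' (by fun_prop) (Filter.Eventually.of_forall fun p => by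
      rw [Real.norm_eq_abs, abs_of_nonneg (sq_nonneg _)]; exact hdv p)
  have key := integral_sq_le_of_hasDerivAt_snd (μ := volume)
    (f := fun p => f (e p)) (f' := fun p => fderiv ℝ f (e p) v) hderiv hcont
    (by rw [← Measure.volume_eq_prod]; exact (he.integrable_comp_emb hemb).2 hf2)
    (by rw [← Measure.volume_eq_prod]; exact hdv2) hR
  rw [← Measure.volume_eq_prod, he.integral_comp hemb (fun x => f x ^ 2)] at key
  have hfar : ∫ p in {p : ℝ × ℝ | R < |p.2|}, f (e p) ^ 2 ≤ ∫ x in (Metric.ball 0 R)ᶜ, f x ^ 2 := by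
    rw [← he.setIntegral_preimage_emb hemb]
    refine setIntegral_mono_set ((he.integrable_comp_emb hemb).2 hf2).integrableOn
      (Filter.Eventually.of_forall fun p => sq_nonneg _)
      (Filter.Eventually.of_forall fun p hp => ?_)
    show e p ∉ Metric.ball 0 R
    rw [mem_ball_zero_iff, not_lt]
    exact (lt_of_lt_of_le hp (abs_snd_le_norm_prodEquivEuclideanFinTwo p)).le
  have hgrad : ∫ p, (fderiv ℝ f (e p) v) ^ 2 ≤ ∫ x, ‖fderiv ℝ f x‖ ^ 2 := by
    rw [← he.integral_comp hemb (fun x => ‖fderiv ℝ f x‖ ^ 2)]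
    exact integral_mono hdv2 hdf2e hdv
  have := mul_le_mul_of_nonneg_left hgrad (by positivity : (0 : ℝ) ≤ 16 * R ^ 2)
  linarith

theorem mul_integral_sq_le_of_le_potential {f V : EuclideanSpace ℝ (Fin 2) → ℝ}
    (hf : ContDiff ℝ 1 f) (hf2 : Integrable fun x => f x ^ 2)
    (hdf2 : Integrable fun x => ‖fderiv ℝ f x‖ ^ 2) (hVf2 : Integrable fun x => V x * f x ^ 2)
    (hV : ∀ x, 0 ≤ V x) {R m : ℝ} (hR : 0 < R) (hm : 0 ≤ m)
    (hVm : ∀ x ∈ (Metric.ball 0 R)ᶜ, m ≤ V x) :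
    m * ∫ x, f x ^ 2 ≤
      4 * (∫ x, V x * f x ^ 2) + 16 * m * R ^ 2 * ∫ x, ‖fderiv ℝ f x‖ ^ 2 := by
  have hfar : m * ∫ x in (Metric.ball 0 R)ᶜ, f x ^ 2 ≤ ∫ x, V x * f x ^ 2 := by
    rw [← integral_const_mul]
    calc ∫ x in (Metric.ball 0 R)ᶜ, m * f x ^ 2
        ≤ ∫ x in (Metric.ball 0 R)ᶜ, V x * f x ^ 2 :=
          setIntegral_mono_on (hf2.const_mul m).integrableOn hVf2.integrableOn
            Metric.isOpen_ball.measurableSet.compl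
            fun x hx => mul_le_mul_of_nonneg_right (hVm x hx) (sq_nonneg _)
      _ ≤ ∫ x, V x * f x ^ 2 :=
          setIntegral_le_integral hVf2 (Filter.Eventually.of_forall fun x =>
            mul_nonneg (hV x) (sq_nonneg _))
  have := mul_le_mul_of_nonneg_left (integral_sq_le_setIntegral_compl_ball hf hf2 hdf2 hR) hm
  linarith

theorem exists_pos_compl_ball_subset_of_mem_cocompact {E : Type*} [SeminormedAddCommGroup E]
    {s : Set E} (hs : s ∈ Filter.cocompact E) : ∃ R > 0, (Metric.ball 0 R)ᶜ ⊆ s := by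
  obtain ⟨r, hr⟩ := Metric.closedBall_compl_subset_of_mem_cocompact hs 0
  refine ⟨max r 0 + 1, by positivity, fun x hx => hr fun hxr => hx ?_⟩
  exact Metric.closedBall_subset_ball (by linarith [le_max_left r 0]) hxr

/-- Coercivity of the quadratic form `f ↦ ∫ (|∇f|² + |φ|² f²)` on `H¹(ℝ²)` when
`|φ| ≤ 1` and `|φ| → 1` at infinity: there is `0 < c ≤ 1` with
`c ‖f‖²_{H¹} ≤ ∫ (|∇f|² + |φ|² f²) ≤ ‖f‖²_{H¹}`. -/
theorem higgs_quadratic_form_coercive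
    (φ : EuclideanSpace ℝ (Fin 2) → ℂ)
    (hφc : Continuous φ) (hφ1 : ∀ x, ‖φ x‖ ≤ 1)
    (hφinf : Filter.Tendsto (fun x => ‖φ x‖)
      (Filter.cocompact (EuclideanSpace ℝ (Fin 2))) (nhds 1)) :
    ∃ c : ℝ, 0 < c ∧ c ≤ 1 ∧
      ∀ f : EuclideanSpace ℝ (Fin 2) → ℝ, ContDiff ℝ 1 f →
        Integrable (fun x => f x ^ 2) →
        Integrable (fun x => ‖fderiv ℝ f x‖ ^ 2) →
        c * (∫ x, (f x ^ 2 + ‖fderiv ℝ f x‖ ^ 2))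
            ≤ (∫ x, (‖fderiv ℝ f x‖ ^ 2 + Complex.normSq (φ x) * f x ^ 2))
          ∧ (∫ x, (‖fderiv ℝ f x‖ ^ 2 + Complex.normSq (φ x) * f x ^ 2))
            ≤ ∫ x, (f x ^ 2 + ‖fderiv ℝ f x‖ ^ 2) := by
  obtain ⟨R, hR, hball⟩ := exists_pos_compl_ball_subset_of_mem_cocompact
    (hφinf.eventually (eventually_ge_nhds one_half_lt_one))
  have hfar : ∀ x ∈ (Metric.ball 0 R)ᶜ, 1 / 4 ≤ Complex.normSq (φ x) := fun x hx => by
    have : 1 / 2 ≤ ‖φ x‖ := hball hx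
    rw [Complex.normSq_eq_norm_sq]
    nlinarith
  have hV1 : ∀ x, Complex.normSq (φ x) ≤ 1 := fun x => by
    rw [Complex.normSq_eq_norm_sq]
    exact pow_le_one₀ (norm_nonneg _) (hφ1 x)
  refine ⟨1 / (16 * (R ^ 2 + 1)), by positivity, by
    rw [div_le_one (by positivity)]; nlinarith, fun f hf hf2 hdf2 => ?_⟩
  have hVf2 : Integrable fun x => Complex.normSq (φ x) * f x ^ 2 :=
    hf2.mono' (by have := hf.continuous; fun_prop) (Filter.Eventually.of_forall fun x => by
      rw [Real.norm_eq_abs, abs_of_nonneg (mul_nonneg (Complex.normSq_nonneg _) (sq_nonneg _))]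
      exact mul_le_of_le_one_left (sq_nonneg _) (hV1 x))
  have key := mul_integral_sq_le_of_le_potential hf hf2 hdf2 hVf2
    (fun x => Complex.normSq_nonneg _) hR (by norm_num) hfar
  have hVle : ∫ x, Complex.normSq (φ x) * f x ^ 2 ≤ ∫ x, f x ^ 2 :=
    integral_mono hVf2 hf2 fun x => mul_le_of_le_one_left (sq_nonneg _) (hV1 x)
  rw [integral_add hf2 hdf2, integral_add hdf2 hVf2]
  refine ⟨?_, by linarith⟩
  rw [div_mul_eq_mul_div, div_le_iff₀ (by positivity)]
  have hgrad : 0 ≤ ∫ x, ‖fderiv ℝ f x‖ ^ 2 := integral_nonneg fun x => sq_nonneg _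
  have hpot : 0 ≤ ∫ x, Complex.normSq (φ x) * f x ^ 2 :=
    integral_nonneg fun x => mul_nonneg (Complex.normSq_nonneg _) (sq_nonneg _)
  nlinarith
end

section
/- For the N-vortex moduli space with lifted tangent vectors ñ_μ(q) = (𝒟_μ φ(q), ℱ_{μa}(q)) where 𝒟_μ = ∂_μ − iχ_μ and ℱ_{μa} = ∂_μ 𝒜_a − ∂_a χ_μ, the commutator identity J_{μν} − J_{νμ} = −(iφ ℱ_{μν}, ∂_a ℱ_{μν}) holds, where J_{μν} := (𝒟_μ 𝒟_ν φ(q), ∂_μ ℱ_{νa}(q)) and ℱ_{μν} = ∂_μ χ_ν − ∂_ν χ_μ. Consequently, since each ñ_λ satisfies the gauge-orthogonality condition ∂_a (ñ_λ)_a = (iφ, (ñ_λ)_φ), one has (J_{μν}, ñ_λ)_{L²(ℝ²)} = (J_{νμ}, ñ_λ)_{L²(ℝ²)} for all μ, ν, λ. -/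
open MeasureTheory

noncomputable section

/-- The domain `ℝ² × ℝ^m`: spatial variables `x_a` and moduli parameters `q_μ`. -/
abbrev Dom (m : ℕ) := EuclideanSpace ℝ (Fin 2) × EuclideanSpace ℝ (Fin m)

/-- Spatial partial derivative `∂_a`. -/
def pdx {m : ℕ} {E : Type*} [NormedAddCommGroup E] [NormedSpace ℝ E]
    (a : Fin 2) (f : Dom m → E) (p : Dom m) : E :=
  fderiv ℝ f p (EuclideanSpace.single a 1, 0)

/-- Moduli partial derivative `∂_μ`. -/
def pdq {m : ℕ} {E : Type*} [NormedAddCommGroup E] [NormedSpace ℝ E]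
    (μ : Fin m) (f : Dom m → E) (p : Dom m) : E :=
  fderiv ℝ f p (0, EuclideanSpace.single μ 1)

/-- `𝒟_μ f = ∂_μ f − i χ_μ f`. -/
def Dq {m : ℕ} (χ : Fin m → Dom m → ℝ) (μ : Fin m) (f : Dom m → ℂ) : Dom m → ℂ :=
  fun p => pdq μ f p - Complex.I * (χ μ p) * f p

/-- `ℱ_{μa} = ∂_μ 𝒜_a − ∂_a χ_μ`. -/
def Fxm {m : ℕ} (𝒜 : Fin 2 → Dom m → ℝ) (χ : Fin m → Dom m → ℝ)
    (μ : Fin m) (a : Fin 2) : Dom m → ℝ :=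
  fun p => pdq μ (𝒜 a) p - pdx a (χ μ) p

/-- `ℱ_{μν} = ∂_μ χ_ν − ∂_ν χ_μ`. -/
def Fqq {m : ℕ} (χ : Fin m → Dom m → ℝ) (μ ν : Fin m) : Dom m → ℝ :=
  fun p => pdq μ (χ ν) p - pdq ν (χ μ) p

/-! Moduli derivatives commute, so in `𝒟_μ 𝒟_ν φ − 𝒟_ν 𝒟_μ φ` and `∂_μ ℱ_{νa} − ∂_ν ℱ_{μa}` only
the derivatives of the gauge functions `χ` survive; they assemble into the infinitesimal gauge
transformation `−(iφ ℱ_{μν}, ∂_a ℱ_{μν})`. Paired with `ñ_λ`, Gauss's law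
`∂_a ℱ_{λa} = (iφ, 𝒟_λ φ)` and the product rule turn this into the divergence
`−∂_a (ℱ_{μν} ℱ_{λa})`, whose integral over the plane vanishes. -/

section DirectionalDerivative

variable {E F : Type*} [NormedAddCommGroup E] [NormedSpace ℝ E]
  [NormedAddCommGroup F] [NormedSpace ℝ F] {f : E → F}

theorem ContDiffAt.fderiv_fderiv_apply_comm {p : E} (hf : ContDiffAt ℝ 2 f p) (v w : E) :
    fderiv ℝ (fun q => fderiv ℝ f q v) p w = fderiv ℝ (fun q => fderiv ℝ f q w) p v := by
  have hd : DifferentiableAt ℝ (fderiv ℝ f) p :=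
    (hf.fderiv_right (m := 1) le_rfl).differentiableAt one_ne_zero
  have hflip (u : E) :
      fderiv ℝ (fun q => fderiv ℝ f q u) p = (fderiv ℝ (fderiv ℝ f) p).flip u := by
    simpa using fderiv_clm_apply hd (differentiableAt_const u)
  rw [hflip, hflip]
  exact (hf.isSymmSndFDerivAt (by simp [minSmoothness_of_isRCLikeNormedField])).eq w v

theorem ContDiff.differentiable_fderiv_apply (hf : ContDiff ℝ 2 f) (v : E) :
    Differentiable ℝ (fun p => fderiv ℝ f p v) :=
  ((hf.fderiv_right (m := 1) le_rfl).clm_apply contDiff_const).differentiable one_ne_zero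

end DirectionalDerivative

section PartialDerivatives

variable {m : ℕ} {F : Type*} [NormedAddCommGroup F] [NormedSpace ℝ F]

theorem ContDiff.differentiable_pdq {f : Dom m → F} (hf : ContDiff ℝ 2 f) (μ : Fin m) :
    Differentiable ℝ (pdq μ f) :=
  hf.differentiable_fderiv_apply _

theorem ContDiff.differentiable_pdx {f : Dom m → F} (hf : ContDiff ℝ 2 f) (a : Fin 2) :
    Differentiable ℝ (pdx a f) :=
  hf.differentiable_fderiv_apply _

theorem pdq_pdq_comm {f : Dom m → F} {p : Dom m} (hf : ContDiffAt ℝ 2 f p) (μ ν : Fin m) :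
    pdq μ (pdq ν f) p = pdq ν (pdq μ f) p :=
  hf.fderiv_fderiv_apply_comm _ _

theorem pdq_pdx_comm {f : Dom m → F} {p : Dom m} (hf : ContDiffAt ℝ 2 f p) (μ : Fin m)
    (a : Fin 2) : pdq μ (pdx a f) p = pdx a (pdq μ f) p :=
  hf.fderiv_fderiv_apply_comm _ _

theorem pdq_sub {f g : Dom m → F} {p : Dom m} (hf : DifferentiableAt ℝ f p)
    (hg : DifferentiableAt ℝ g p) (μ : Fin m) :
    pdq μ (fun q => f q - g q) p = pdq μ f p - pdq μ g p := by
  simp [pdq, fderiv_fun_sub hf hg]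

theorem pdx_sub {f g : Dom m → F} {p : Dom m} (hf : DifferentiableAt ℝ f p)
    (hg : DifferentiableAt ℝ g p) (a : Fin 2) :
    pdx a (fun q => f q - g q) p = pdx a f p - pdx a g p := by
  simp [pdx, fderiv_fun_sub hf hg]

variable {𝔸 : Type*} [NormedCommRing 𝔸] [NormedAlgebra ℝ 𝔸]

theorem pdq_mul {f g : Dom m → 𝔸} {p : Dom m} (hf : DifferentiableAt ℝ f p)
    (hg : DifferentiableAt ℝ g p) (μ : Fin m) :
    pdq μ (fun q => f q * g q) p = pdq μ f p * g p + f p * pdq μ g p := by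
  simp [pdq, fderiv_fun_mul hf hg, mul_comm, add_comm]

theorem pdx_mul {f g : Dom m → 𝔸} {p : Dom m} (hf : DifferentiableAt ℝ f p)
    (hg : DifferentiableAt ℝ g p) (a : Fin 2) :
    pdx a (fun q => f q * g q) p = pdx a f p * g p + f p * pdx a g p := by
  simp [pdx, fderiv_fun_mul hf hg, mul_comm, add_comm]

theorem pdq_const_mul {f : Dom m → 𝔸} {p : Dom m} (hf : DifferentiableAt ℝ f p) (c : 𝔸)
    (μ : Fin m) : pdq μ (fun q => c * f q) p = c * pdq μ f p := by
  simp [pdq, fderiv_const_mul hf c]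

theorem pdq_ofReal {f : Dom m → ℝ} {p : Dom m} (hf : DifferentiableAt ℝ f p) (μ : Fin m) :
    pdq μ (fun q => (f q : ℂ)) p = pdq μ f p := by
  have h : HasFDerivAt (fun q => (f q : ℂ)) (Complex.ofRealCLM.comp (fderiv ℝ f p)) p :=
    Complex.ofRealCLM.hasFDerivAt.comp p hf.hasFDerivAt
  rw [pdq, pdq, h.fderiv]
  rfl

end PartialDerivatives

section Commutators

variable {m : ℕ} {φ : Dom m → ℂ} {𝒜 : Fin 2 → Dom m → ℝ} {χ : Fin m → Dom m → ℝ}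

theorem pdq_Dq {ν : Fin m} (hφ : ContDiff ℝ 2 φ) (hχ : ContDiff ℝ 1 (χ ν)) (μ : Fin m)
    (p : Dom m) :
    pdq μ (Dq χ ν φ) p
      = pdq μ (pdq ν φ) p - Complex.I * (pdq μ (χ ν) p * φ p + χ ν p * pdq μ φ p) := by
  have hχ' : DifferentiableAt ℝ (χ ν) p := hχ.differentiable one_ne_zero p
  have hφ' : DifferentiableAt ℝ φ p := hφ.differentiable two_ne_zero p
  have hχℂ : DifferentiableAt ℝ (fun q => (χ ν q : ℂ)) p :=
    Complex.ofRealCLM.differentiableAt.comp p hχ'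
  have hχφ : DifferentiableAt ℝ (fun q => (χ ν q : ℂ) * φ q) p := hχℂ.mul hφ'
  rw [show Dq χ ν φ = fun q => pdq ν φ q - Complex.I * ((χ ν q : ℂ) * φ q) by
    ext q; simp [Dq, mul_assoc]]
  rw [pdq_sub (hφ.differentiable_pdq ν p) (hχφ.const_mul _), pdq_const_mul hχφ,
    pdq_mul hχℂ hφ', pdq_ofReal hχ']

theorem Dq_Dq_sub_Dq_Dq (hφ : ContDiff ℝ 2 φ) (hχ : ∀ μ, ContDiff ℝ 1 (χ μ)) (μ ν : Fin m)
    (p : Dom m) :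
    Dq χ μ (Dq χ ν φ) p - Dq χ ν (Dq χ μ φ) p = -(Complex.I * φ p * (Fqq χ μ ν p : ℂ)) := by
  simp only [Dq, Fqq]
  rw [pdq_Dq hφ (hχ ν), pdq_Dq hφ (hχ μ), pdq_pdq_comm hφ.contDiffAt μ ν]
  push_cast
  ring

theorem pdq_Fxm_sub_pdq_Fxm (h𝒜 : ∀ a, ContDiff ℝ 2 (𝒜 a)) (hχ : ∀ μ, ContDiff ℝ 2 (χ μ))
    (μ ν : Fin m) (a : Fin 2) (p : Dom m) :
    pdq μ (Fxm 𝒜 χ ν a) p - pdq ν (Fxm 𝒜 χ μ a) p = -pdx a (Fqq χ μ ν) p := by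
  have pdq_Fxm (α β : Fin m) :
      pdq α (Fxm 𝒜 χ β a) p = pdq α (pdq β (𝒜 a)) p - pdx a (pdq α (χ β)) p := by
    unfold Fxm
    rw [pdq_sub ((h𝒜 a).differentiable_pdq β p) ((hχ β).differentiable_pdx a p),
      pdq_pdx_comm (hχ β).contDiffAt]
  rw [pdq_Fxm, pdq_Fxm]
  unfold Fqq
  rw [pdx_sub ((hχ ν).differentiable_pdq μ p) ((hχ μ).differentiable_pdq ν p),
    pdq_pdq_comm (h𝒜 a).contDiffAt μ ν]
  ring

end Commutators

theorem rip_sub_left_s18 (x y z : ℂ) : rip (x - y) z = rip x z - rip y z := by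
  simp [rip, sub_mul]

theorem rip_neg_mul_ofReal_left (x z : ℂ) (r : ℝ) : rip (-(x * r)) z = -(r * rip x z) := by
  rw [rip, rip, neg_mul, mul_right_comm, Complex.neg_re, Complex.re_mul_ofReal, mul_comm]

section Pairing

variable {m : ℕ} (φ : Dom m → ℂ) (𝒜 : Fin 2 → Dom m → ℝ) (χ : Fin m → Dom m → ℝ)

/-- The pointwise pairing `(J_{μν}, ñ_λ)` of `J_{μν} = (𝒟_μ 𝒟_ν φ, ∂_μ ℱ_{νa})` with
`ñ_λ = (𝒟_λ φ, ℱ_{λa})`. -/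
def Jpairing (μ ν lam : Fin m) (p : Dom m) : ℝ :=
  rip (Dq χ μ (Dq χ ν φ) p) (Dq χ lam φ p)
    + ∑ a : Fin 2, pdq μ (Fxm 𝒜 χ ν a) p * Fxm 𝒜 χ lam a p

variable {φ 𝒜 χ}

theorem Jpairing_sub_Jpairing (hφ : ContDiff ℝ 2 φ) (h𝒜 : ∀ a, ContDiff ℝ 2 (𝒜 a))
    (hχ : ∀ μ, ContDiff ℝ 2 (χ μ)) (μ ν lam : Fin m) (p : Dom m)
    (hgauge : ∑ a : Fin 2, pdx a (Fxm 𝒜 χ lam a) p = rip (Complex.I * φ p) (Dq χ lam φ p)) :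
    Jpairing φ 𝒜 χ μ ν lam p - Jpairing φ 𝒜 χ ν μ lam p
      = -∑ a : Fin 2, pdx a (fun q => Fqq χ μ ν q * Fxm 𝒜 χ lam a q) p := by
  have hFqq : DifferentiableAt ℝ (Fqq χ μ ν) p :=
    ((hχ ν).differentiable_pdq μ p).sub ((hχ μ).differentiable_pdq ν p)
  have hFxm (a : Fin 2) : DifferentiableAt ℝ (Fxm 𝒜 χ lam a) p :=
    ((h𝒜 a).differentiable_pdq lam p).sub ((hχ lam).differentiable_pdx a p)
  have hχ1 (μ : Fin m) : ContDiff ℝ 1 (χ μ) := (hχ μ).of_le one_le_two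
  calc Jpairing φ 𝒜 χ μ ν lam p - Jpairing φ 𝒜 χ ν μ lam p
      = rip (Dq χ μ (Dq χ ν φ) p - Dq χ ν (Dq χ μ φ) p) (Dq χ lam φ p)
          + ∑ a : Fin 2, (pdq μ (Fxm 𝒜 χ ν a) p - pdq ν (Fxm 𝒜 χ μ a) p) * Fxm 𝒜 χ lam a p := by
        simp only [Jpairing, rip_sub_left_s18, sub_mul, Finset.sum_sub_distrib]
        ring
    _ = -(Fqq χ μ ν p * ∑ a : Fin 2, pdx a (Fxm 𝒜 χ lam a) p
          + ∑ a : Fin 2, pdx a (Fqq χ μ ν) p * Fxm 𝒜 χ lam a p) := by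
        simp only [Dq_Dq_sub_Dq_Dq hφ hχ1, rip_neg_mul_ofReal_left,
          pdq_Fxm_sub_pdq_Fxm h𝒜 hχ, hgauge, neg_mul, Finset.sum_neg_distrib]
        ring
    _ = -∑ a : Fin 2, pdx a (fun q => Fqq χ μ ν q * Fxm 𝒜 χ lam a q) p := by
        simp only [pdx_mul hFqq (hFxm _), Finset.sum_add_distrib, Finset.mul_sum]
        ring

end Pairing

/-- The commutator identity `J_{μν} − J_{νμ} = −(iφ ℱ_{μν}, ∂_a ℱ_{μν})` for the
lifted moduli-space data `J_{μν} = (𝒟_μ 𝒟_ν φ, ∂_μ ℱ_{νa})`; consequently, since each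
`ñ_λ = (𝒟_λ φ, ℱ_{λa})` is gauge-orthogonal (`∂_a ℱ_{λa} = (iφ, 𝒟_λ φ)`), the `L²(ℝ²)`
pairings satisfy `(J_{μν}, ñ_λ)_{L²} = (J_{νμ}, ñ_λ)_{L²}` (given the integrability and
integration-by-parts hypotheses expressing decay at infinity). -/
theorem moduli_commutator_identity
    (m : ℕ) (φ : Dom m → ℂ) (𝒜 : Fin 2 → Dom m → ℝ) (χ : Fin m → Dom m → ℝ)
    (hφ : ContDiff ℝ (⊤ : ℕ∞) φ) (h𝒜 : ∀ a, ContDiff ℝ (⊤ : ℕ∞) (𝒜 a))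
    (hχ : ∀ μ, ContDiff ℝ (⊤ : ℕ∞) (χ μ)) :
    (∀ (μ ν : Fin m) (p : Dom m),
        (Dq χ μ (Dq χ ν φ) p - Dq χ ν (Dq χ μ φ) p
          = -(Complex.I * φ p * ((Fqq χ μ ν p : ℝ) : ℂ)))
        ∧ ∀ a : Fin 2, pdq μ (Fxm 𝒜 χ ν a) p - pdq ν (Fxm 𝒜 χ μ a) p
            = -(pdx a (Fqq χ μ ν) p))
      ∧ ∀ q : EuclideanSpace ℝ (Fin m),
        (∀ (lam : Fin m) (x : EuclideanSpace ℝ (Fin 2)),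
          (∑ a : Fin 2, pdx a (fun p => Fxm 𝒜 χ lam a p) (x, q))
            = rip (Complex.I * φ (x, q)) (Dq χ lam φ (x, q))) →
        (∀ μ ν lam : Fin m, Integrable (fun x : EuclideanSpace ℝ (Fin 2) =>
          rip (Dq χ μ (Dq χ ν φ) (x, q)) (Dq χ lam φ (x, q)))) →
        (∀ (μ ν lam : Fin m) (a : Fin 2),
          Integrable (fun x : EuclideanSpace ℝ (Fin 2) =>
            pdq μ (Fxm 𝒜 χ ν a) (x, q) * Fxm 𝒜 χ lam a (x, q))) →
        (∀ μ ν lam : Fin m, Integrable (fun x : EuclideanSpace ℝ (Fin 2) =>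
          Fqq χ μ ν (x, q) * rip (Complex.I * φ (x, q)) (Dq χ lam φ (x, q)))) →
        (∀ μ ν lam : Fin m,
          (∫ x : EuclideanSpace ℝ (Fin 2),
            ∑ a : Fin 2, pdx a (fun p => Fqq χ μ ν p * Fxm 𝒜 χ lam a p) (x, q)) = 0) →
        ∀ μ ν lam : Fin m,
          (∫ x : EuclideanSpace ℝ (Fin 2),
              (rip (Dq χ μ (Dq χ ν φ) (x, q)) (Dq χ lam φ (x, q))
                + ∑ a : Fin 2, pdq μ (Fxm 𝒜 χ ν a) (x, q) * Fxm 𝒜 χ lam a (x, q)))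
            = ∫ x : EuclideanSpace ℝ (Fin 2),
                (rip (Dq χ ν (Dq χ μ φ) (x, q)) (Dq χ lam φ (x, q))
                  + ∑ a : Fin 2, pdq ν (Fxm 𝒜 χ μ a) (x, q) * Fxm 𝒜 χ lam a (x, q)) := by
  have two_le : (2 : WithTop ℕ∞) ≤ (⊤ : ℕ∞) := WithTop.coe_le_coe.2 le_top
  have hφ2 : ContDiff ℝ 2 φ := hφ.of_le two_le
  have h𝒜2 (a : Fin 2) : ContDiff ℝ 2 (𝒜 a) := (h𝒜 a).of_le two_le
  have hχ2 (μ : Fin m) : ContDiff ℝ 2 (χ μ) := (hχ μ).of_le two_le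
  refine ⟨fun μ ν p => ⟨Dq_Dq_sub_Dq_Dq hφ2 (fun μ => (hχ2 μ).of_le one_le_two) μ ν p,
    fun a => pdq_Fxm_sub_pdq_Fxm h𝒜2 hχ2 μ ν a p⟩, ?_⟩
  intro q hgauge hJ hF _ hIBP μ ν lam
  have hint (μ ν : Fin m) : Integrable fun x => Jpairing φ 𝒜 χ μ ν lam (x, q) :=
    (hJ μ ν lam).add (integrable_finsetSum _ fun a _ => hF μ ν lam a)
  have hdiff : (fun x => Jpairing φ 𝒜 χ μ ν lam (x, q) - Jpairing φ 𝒜 χ ν μ lam (x, q))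
      = fun x => -∑ a : Fin 2, pdx a (fun p => Fqq χ μ ν p * Fxm 𝒜 χ lam a p) (x, q) :=
    funext fun x => Jpairing_sub_Jpairing hφ2 h𝒜2 hχ2 μ ν lam _ (hgauge lam x)
  change ∫ x, Jpairing φ 𝒜 χ μ ν lam (x, q) = ∫ x, Jpairing φ 𝒜 χ ν μ lam (x, q)
  rw [← sub_eq_zero, ← integral_sub (hint μ ν) (hint ν μ), hdiff, integral_neg, hIBP μ ν lam,
    neg_zero]
end
end
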